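/- arXiv:1906.10787 — 4 statements merged into one kernel-verified Lean document; each statement's English description precedes it below -/
import Mathlib

section
/- Let $A$ be a symmetric nonnegative real $n\times n$ matrix and let $p \ge 2$. Then the $p$-norm of $A$, i.e. the maximum of $|\sum_{i,j} a_{i,j} x_i y_j|$ over all vectors $x, y \in \mathbb{R}^n$ with $\ell^p$ norm $|x|_p = |y|_p = 1$, is equal to the maximum of $\sum_{i,j} a_{i,j} x_i x_j$ over all $x \in \mathbb{R}^n$ with $|x|_p = 1$. -/
/-!
Taking absolute values, `|L_A(x, y)| ≤ L_A(|x|, |y|)`, and by symmetry of `A` the right side is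
`∑ a_ij (u_i w_j + w_i u_j) / 2` with `u = |x|`, `w = |y|`. Entrywise, by Cauchy–Schwarz and the
power mean inequality `M_2 ≤ M_p` for `p ≥ 2`,
`(u_i w_j + w_i u_j) / 2 ≤ M_p(u_i, w_i) M_p(u_j, w_j)`, where `M_p(a, b) = ((a^p + b^p) / 2)^(1/p)`.
Hence `|L_A(x, y)| ≤ L_A(z, z)` for the vector `z_i = M_p(|x_i|, |y_i|)`, which again has `|z|_p = 1`.
-/

open Finset

/-- The `ℓ^p` norm of a vector in `ℝ^n`. -/
noncomputable def lpNorm {n : ℕ} (p : ℝ) (x : Fin n → ℝ) : ℝ :=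
  (∑ i, |x i| ^ p) ^ (1 / p)

noncomputable def powerMean (p a b : ℝ) : ℝ :=
  ((a ^ p + b ^ p) / 2) ^ (1 / p)

section PowerMean

variable {p a b : ℝ}

lemma powerMean_nonneg (ha : 0 ≤ a) (hb : 0 ≤ b) : 0 ≤ powerMean p a b := by
  unfold powerMean
  positivity

lemma powerMean_rpow (ha : 0 ≤ a) (hb : 0 ≤ b) (hp : p ≠ 0) :
    powerMean p a b ^ p = (a ^ p + b ^ p) / 2 := by
  rw [powerMean, one_div, Real.rpow_inv_rpow (by positivity) hp]

lemma sq_mean_le_sq_powerMean (hp : 2 ≤ p) (ha : 0 ≤ a) (hb : 0 ≤ b) :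
    (a ^ 2 + b ^ 2) / 2 ≤ powerMean p a b ^ 2 := by
  have hp2 : 0 < p / 2 := by linarith
  have hsq_rpow : ∀ t : ℝ, 0 ≤ t → (t ^ 2) ^ (p / 2) = t ^ p := fun t ht => by
    rw [← Real.rpow_natCast, ← Real.rpow_mul ht]
    ring_nf
  have hconv := (convexOn_rpow (p := p / 2) (by linarith)).2 (sq_nonneg a : a ^ 2 ∈ Set.Ici 0)
    (sq_nonneg b : b ^ 2 ∈ Set.Ici 0) (by norm_num : (0 : ℝ) ≤ 1 / 2)
    (by norm_num : (0 : ℝ) ≤ 1 / 2) (by norm_num)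
  rw [← Real.rpow_le_rpow_iff (by positivity) (sq_nonneg _) hp2,
    hsq_rpow _ (powerMean_nonneg ha hb), powerMean_rpow ha hb (by linarith)]
  simp only [smul_eq_mul, hsq_rpow a ha, hsq_rpow b hb] at hconv
  rw [show (a ^ 2 + b ^ 2) / 2 = 1 / 2 * a ^ 2 + 1 / 2 * b ^ 2 by ring]
  linarith

lemma mul_add_mul_le_powerMean_mul {c d : ℝ} (hp : 2 ≤ p) (ha : 0 ≤ a) (hb : 0 ≤ b)
    (hc : 0 ≤ c) (hd : 0 ≤ d) :
    (a * d + b * c) / 2 ≤ powerMean p a b * powerMean p c d := by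
  refine le_of_sq_le_sq ?_ (mul_nonneg (powerMean_nonneg ha hb) (powerMean_nonneg hc hd))
  calc ((a * d + b * c) / 2) ^ 2 ≤ (a ^ 2 + b ^ 2) / 2 * ((c ^ 2 + d ^ 2) / 2) := by
        nlinarith [sq_nonneg (a * c - b * d)]
    _ ≤ powerMean p a b ^ 2 * powerMean p c d ^ 2 :=
        mul_le_mul (sq_mean_le_sq_powerMean hp ha hb) (sq_mean_le_sq_powerMean hp hc hd)
          (by positivity) (sq_nonneg _)
    _ = (powerMean p a b * powerMean p c d) ^ 2 := (mul_pow _ _ _).symm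

end PowerMean

section LpNorm

variable {n : ℕ} {p : ℝ}

lemma lpNorm_eq_one_iff (hp : p ≠ 0) {x : Fin n → ℝ} : lpNorm p x = 1 ↔ ∑ i, |x i| ^ p = 1 := by
  rw [lpNorm, one_div, Real.rpow_inv_eq (sum_nonneg fun i _ => by positivity) zero_le_one hp,
    Real.one_rpow]

lemma lpNorm_powerMean_eq_one (hp : p ≠ 0) {x y : Fin n → ℝ} (hx : lpNorm p x = 1)
    (hy : lpNorm p y = 1) : lpNorm p (fun i => powerMean p |x i| |y i|) = 1 := by
  rw [lpNorm_eq_one_iff hp] at hx hy ⊢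
  calc _ = ∑ i, (|x i| ^ p + |y i| ^ p) / 2 :=
        sum_congr rfl fun i _ => by
          rw [abs_of_nonneg (powerMean_nonneg (abs_nonneg _) (abs_nonneg _)),
            powerMean_rpow (abs_nonneg _) (abs_nonneg _) hp]
    _ = 1 := by
        rw [← sum_div, sum_add_distrib, hx, hy]
        norm_num

end LpNorm

section BilinearForm

variable {ι : Type*} [Fintype ι] {A : Matrix ι ι ℝ}

lemma abs_sum_sum_mul_le_sum_sum_mul_abs (hA : ∀ i j, 0 ≤ A i j) (x y : ι → ℝ) :
    |∑ i, ∑ j, A i j * x i * y j| ≤ ∑ i, ∑ j, A i j * |x i| * |y j| :=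
  (abs_sum_le_sum_abs _ _).trans <| sum_le_sum fun i _ =>
    (abs_sum_le_sum_abs _ _).trans_eq <| sum_congr rfl fun j _ => by
      rw [abs_mul, abs_mul, abs_of_nonneg (hA i j)]

lemma Matrix.IsSymm.sum_sum_mul_comm (hsym : A.IsSymm) (u w : ι → ℝ) :
    ∑ i, ∑ j, A i j * u i * w j = ∑ i, ∑ j, A i j * w i * u j := by
  rw [sum_comm]
  refine sum_congr rfl fun i _ => sum_congr rfl fun j _ => ?_
  rw [hsym.apply]
  ring

lemma sum_sum_mul_le_sum_sum_mul_powerMean {p : ℝ} (hp : 2 ≤ p) (hsym : A.IsSymm)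
    (hA : ∀ i j, 0 ≤ A i j) {u w : ι → ℝ} (hu : ∀ i, 0 ≤ u i) (hw : ∀ i, 0 ≤ w i) :
    ∑ i, ∑ j, A i j * u i * w j ≤
      ∑ i, ∑ j, A i j * powerMean p (u i) (w i) * powerMean p (u j) (w j) := by
  calc ∑ i, ∑ j, A i j * u i * w j
        = (∑ i, ∑ j, A i j * u i * w j + ∑ i, ∑ j, A i j * w i * u j) / 2 := by
          rw [← hsym.sum_sum_mul_comm]
          ring
    _ = ∑ i, ∑ j, A i j * ((u i * w j + w i * u j) / 2) := by
          rw [← sum_add_distrib, sum_div]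
          refine sum_congr rfl fun i _ => ?_
          rw [← sum_add_distrib, sum_div]
          exact sum_congr rfl fun j _ => by ring
    _ ≤ _ := sum_le_sum fun i _ => sum_le_sum fun j _ => by
          rw [mul_assoc (A i j)]
          exact mul_le_mul_of_nonneg_left
            (mul_add_mul_le_powerMean_mul hp (hu i) (hw i) (hu j) (hw j)) (hA i j)

end BilinearForm

/-- **Theorem 1 (th2p).** If `A` is a symmetric nonnegative `n × n` matrix and `p ≥ 2`,
then the `p`-norm of `A`, i.e. the maximum of `|∑ a_{ij} x_i y_j|` over `|x|_p = |y|_p = 1`,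
equals the maximum of `∑ a_{ij} x_i x_j` over `|x|_p = 1`. -/
theorem pNorm_eq_max_quadratic_of_symm_nonneg {n : ℕ} {p : ℝ} (hp : 2 ≤ p)
    (A : Matrix (Fin n) (Fin n) ℝ) (hsym : A.IsSymm) (hA : ∀ i j, 0 ≤ A i j) :
    sSup {v | ∃ x y : Fin n → ℝ, lpNorm p x = 1 ∧ lpNorm p y = 1 ∧
        v = |∑ i, ∑ j, A i j * x i * y j|}
      = sSup {v | ∃ x : Fin n → ℝ, lpNorm p x = 1 ∧
        v = ∑ i, ∑ j, A i j * x i * x j} := by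
  have hp0 : p ≠ 0 := by positivity
  apply csSup_eq_csSup_of_forall_exists_le
  · rintro _ ⟨x, y, hx, hy, rfl⟩
    exact ⟨_, ⟨_, lpNorm_powerMean_eq_one hp0 hx hy, rfl⟩,
      (abs_sum_sum_mul_le_sum_sum_mul_abs hA x y).trans
        (sum_sum_mul_le_sum_sum_mul_powerMean hp hsym hA (fun i => abs_nonneg (x i))
          (fun i => abs_nonneg (y i)))⟩
  · rintro _ ⟨x, hx, rfl⟩
    exact ⟨_, ⟨x, x, hx, hx, rfl⟩, le_abs_self _⟩
end

section
/- Let $r \ge 2$ and let $A$ be a $(j,k)$-symmetric $r$-matrix of order $n_1 \times \cdots \times n_r$. Then $\|A\|_2 = \max |L_A(x^{(1)}, \ldots, x^{(r)})|$, where the maximum is taken over all vectors $x^{(1)} \in \mathbb{R}^{n_1}, \ldots, x^{(r)} \in \mathbb{R}^{n_r}$ with $|x^{(1)}|_2 = \cdots = |x^{(r)}|_2 = 1$ and additionally $x^{(j)} = x^{(k)}$. -/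
/-!
Fix all vectors but those in slots `j` and `k`. By the symmetry of `A`, the linear form becomes a
symmetric bilinear form `B` on `ℝ^{n_j}`. Polarization,
`4 B(u, v) = B(u + v, u + v) - B(u - v, u - v)`, and the parallelogram law,
`|u + v|² + |u - v|² = 4` for unit vectors `u, v`, bound `|B(u, v)|` by the largest `|B(w, w)|`
over unit `w`, and `B(w, w)` is a value of the form at a tuple whose `j`-th and `k`-th vectors
agree.
-/

open Finset

/-- The linear form of an `r`-matrix `A` of order `n 0 × ⋯ × n (r-1)`:
`L_A(x⁽¹⁾, …, x⁽ʳ⁾) = ∑ a_{i₁,…,i_r} x⁽¹⁾_{i₁} ⋯ x⁽ʳ⁾_{i_r}`. -/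
noncomputable def linForm {r : ℕ} {n : Fin r → ℕ} (A : (∀ t, Fin (n t)) → ℝ)
    (x : ∀ t, Fin (n t) → ℝ) : ℝ :=
  ∑ i : ∀ t, Fin (n t), A i * ∏ t, x t (i t)

/-- The index tuple obtained from `i` by swapping its `j`-th and `k`-th entries
(given `n j = n k`). -/
def swapIdx {r : ℕ} {n : Fin r → ℕ} (j k : Fin r) (h : n j = n k)
    (i : ∀ t, Fin (n t)) : ∀ t, Fin (n t) := fun t =>
  if ht : t = j then Fin.cast (h.symm.trans (congrArg n ht).symm) (i k)
  else if ht' : t = k then Fin.cast (h.trans (congrArg n ht').symm) (i j)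
  else i t

/-- The `p`-norm of an `r`-matrix:
`‖A‖_p = max {|L_A(x⁽¹⁾,…,x⁽ʳ⁾)| : |x⁽¹⁾|_p = ⋯ = |x⁽ʳ⁾|_p = 1}`. -/
noncomputable def hmNorm {r : ℕ} {n : Fin r → ℕ} (p : ℝ)
    (A : (∀ t, Fin (n t)) → ℝ) : ℝ :=
  sSup {v | ∃ x : ∀ t, Fin (n t) → ℝ, (∀ t, lpNorm p (x t) = 1) ∧ v = |linForm A x|}

open Function

theorem Real.sSup_eq_of_upperBounds_eq {s t : Set ℝ} (h : upperBounds s = upperBounds t) :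
    sSup s = sSup t := by
  have transfer : ∀ {s t : Set ℝ}, upperBounds s = upperBounds t →
      s.Nonempty ∧ BddAbove s → t.Nonempty ∧ BddAbove t := by
    rintro s t h ⟨⟨x, hx⟩, hbdd⟩
    refine ⟨Set.nonempty_iff_ne_empty.mpr fun ht => ?_, by rwa [BddAbove, ← h]⟩
    have : x - 1 ∈ upperBounds s := by simp [h, ht]
    linarith [this hx]
  by_cases hs : s.Nonempty ∧ BddAbove s
  · obtain ⟨hne, hbdd⟩ := transfer h hs
    exact (((isLUB_congr h).mp (isLUB_csSup hs.1 hs.2)).csSup_eq hne).symm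
  · have ht : ¬(t.Nonempty ∧ BddAbove t) := fun ht => hs (transfer h.symm ht)
    rw [Real.sSup_def, Real.sSup_def, dif_neg hs, dif_neg ht]

namespace LinearMap.BilinForm

variable {E : Type*} [NormedAddCommGroup E]

theorem abs_apply_self_le [NormedSpace ℝ E] (B : LinearMap.BilinForm ℝ E) {M : ℝ}
    (hM : ∀ w, ‖w‖ = 1 → |B w w| ≤ M) (w : E) : |B w w| ≤ M * ‖w‖ ^ 2 := by
  rcases eq_or_ne w 0 with rfl | hw
  · simp
  have hw' : w = ‖w‖ • (‖w‖⁻¹ • w) := by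
    rw [smul_smul, mul_inv_cancel₀ (norm_ne_zero_iff.mpr hw), one_smul]
  calc |B w w| = ‖w‖ ^ 2 * |B (‖w‖⁻¹ • w) (‖w‖⁻¹ • w)| := by
        conv_lhs => rw [hw']
        simp only [map_smul, smul_apply, smul_eq_mul, abs_mul, abs_norm]
        ring
    _ ≤ M * ‖w‖ ^ 2 := by
        rw [mul_comm]
        exact mul_le_mul_of_nonneg_right (hM _ (norm_smul_inv_norm (𝕜 := ℝ) hw)) (by positivity)

theorem abs_apply_le_of_isSymm [InnerProductSpace ℝ E] {B : LinearMap.BilinForm ℝ E} (hB : B.IsSymm)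
    {M : ℝ} (hM : ∀ w, ‖w‖ = 1 → |B w w| ≤ M) {u v : E} (hu : ‖u‖ = 1) (hv : ‖v‖ = 1) :
    |B u v| ≤ M := by
  have polar : 4 * B u v = B (u + v) (u + v) - B (u - v) (u - v) := by
    simp only [map_add, map_sub, LinearMap.add_apply, LinearMap.sub_apply, hB.eq v u]
    ring
  have parallelogram : ‖u + v‖ ^ 2 + ‖u - v‖ ^ 2 = 4 := by
    rw [parallelogram_law_with_norm ℝ, hu, hv]
    norm_num
  have hsum : 4 * |B u v| ≤ M * (‖u + v‖ ^ 2 + ‖u - v‖ ^ 2) := by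
    calc 4 * |B u v| = |B (u + v) (u + v) - B (u - v) (u - v)| := by
          rw [← polar, abs_mul, abs_of_pos (four_pos : (0 : ℝ) < 4)]
      _ ≤ |B (u + v) (u + v)| + |B (u - v) (u - v)| := abs_sub _ _
      _ ≤ M * ‖u + v‖ ^ 2 + M * ‖u - v‖ ^ 2 :=
          add_le_add (abs_apply_self_le B hM _) (abs_apply_self_le B hM _)
      _ = _ := by ring
  rw [parallelogram] at hsum
  linarith

end LinearMap.BilinForm

namespace MultilinearMap

variable {ι : Type*} [DecidableEq ι]

section bilinUpdate

variable {R : Type*} [CommSemiring R] {M : ι → Type*} [∀ i, AddCommMonoid (M i)]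
  [∀ i, Module R (M i)] {N : Type*} [AddCommMonoid N] [Module R N]

def bilinUpdate (f : MultilinearMap R M N) (x : ∀ i, M i) {j k : ι} (hjk : j ≠ k) :
    M j →ₗ[R] M k →ₗ[R] N :=
  LinearMap.mk₂ R (fun u v => f (update (update x k v) j u))
    (fun _ _ _ => f.map_update_add _ _ _ _)
    (fun _ _ _ => f.map_update_smul _ _ _ _)
    (fun _ _ _ => by simp only [update_comm hjk.symm]; exact f.map_update_add _ _ _ _)
    (fun _ _ _ => by simp only [update_comm hjk.symm]; exact f.map_update_smul _ _ _ _)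

theorem bilinUpdate_apply (f : MultilinearMap R M N) (x : ∀ i, M i) {j k : ι} (hjk : j ≠ k)
    (u : M j) (v : M k) : f.bilinUpdate x hjk u v = f (update (update x k v) j u) :=
  rfl

end bilinUpdate

variable {E : ι → Type*} [∀ i, NormedAddCommGroup (E i)] [∀ i, InnerProductSpace ℝ (E i)]
  (f : MultilinearMap ℝ E ℝ) {j k : ι} (e : E j ≃ₗᵢ[ℝ] E k)

theorem abs_apply_le_of_symm (hjk : j ≠ k)
    (hf : ∀ y u v, f (update (update y k (e v)) j u) = f (update (update y k (e u)) j v)) {M : ℝ}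
    (hM : ∀ y, (∀ i, ‖y i‖ = 1) → e (y j) = y k → |f y| ≤ M)
    {y : ∀ i, E i} (hy : ∀ i, ‖y i‖ = 1) : |f y| ≤ M := by
  let B : LinearMap.BilinForm ℝ (E j) := (f.bilinUpdate y hjk).compl₂ (e : E j →ₗ[ℝ] E k)
  have hB : B.IsSymm := ⟨fun u v => hf y u v⟩
  have hdiag : ∀ w, ‖w‖ = 1 → |B w w| ≤ M := by
    intro w hw
    refine hM _ (fun i => ?_) (by simp [hjk.symm])
    rcases eq_or_ne i j with rfl | hij
    · simp [hw]
    rcases eq_or_ne i k with rfl | hik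
    · simp [hij, hw]
    · simp [hij, hik, hy i]
  have := B.abs_apply_le_of_isSymm hB hdiag (hy j) (v := e.symm (y k)) (by simp [hy k])
  simpa [B, bilinUpdate_apply] using this

theorem sSup_abs_eq_sSup_abs_of_symm (hjk : j ≠ k)
    (hf : ∀ y u v, f (update (update y k (e v)) j u) = f (update (update y k (e u)) j v)) :
    sSup {c | ∃ y, (∀ i, ‖y i‖ = 1) ∧ c = |f y|} =
      sSup {c | ∃ y, (∀ i, ‖y i‖ = 1) ∧ e (y j) = y k ∧ c = |f y|} := by
  refine Real.sSup_eq_of_upperBounds_eq (Set.Subset.antisymm ?_ ?_)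
  · rintro M hM _ ⟨y, hy, -, rfl⟩
    exact hM ⟨y, hy, rfl⟩
  · rintro M hM _ ⟨y, hy, rfl⟩
    exact f.abs_apply_le_of_symm e hjk hf (fun y hy he => hM ⟨y, hy, he, rfl⟩) hy

end MultilinearMap

theorem lpNorm_toReal_eq_norm_toLp {m : ℕ} {p : ENNReal} (hp : 0 < p.toReal) (x : Fin m → ℝ) :
    lpNorm p.toReal x = ‖WithLp.toLp p x‖ := by
  simp [PiLp.norm_eq_sum hp, lpNorm, Real.norm_eq_abs]

theorem piLpCongrLeft_finCongr_toLp_eq_iff {m m' : ℕ} (h : m = m') (u : Fin m → ℝ)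
    (v : Fin m' → ℝ) :
    LinearIsometryEquiv.piLpCongrLeft 2 ℝ ℝ (finCongr h) (WithLp.toLp 2 u) = WithLp.toLp 2 v ↔
      ∀ a, u a = v (Fin.cast h a) := by
  subst h
  simp [WithLp.ext_iff, funext_iff, LinearIsometryEquiv.piLpCongrLeft_apply]

section swapIdx

variable {r : ℕ} {n : Fin r → ℕ} {j k : Fin r} (h : n j = n k) (i : ∀ t, Fin (n t))

theorem swapIdx_apply_left : swapIdx j k h i j = Fin.cast h.symm (i k) := by
  simp [swapIdx]

theorem swapIdx_apply_right (hjk : j ≠ k) : swapIdx j k h i k = Fin.cast h (i j) := by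
  simp [swapIdx, hjk.symm]

theorem swapIdx_apply_of_ne {t : Fin r} (htj : t ≠ j) (htk : t ≠ k) : swapIdx j k h i t = i t := by
  simp [swapIdx, htj, htk]

theorem swapIdx_involutive (hjk : j ≠ k) : Involutive (swapIdx j k h) := by
  intro i
  funext t
  by_cases htj : t = j
  · subst htj
    simp [swapIdx_apply_left, swapIdx_apply_right h _ hjk]
  by_cases htk : t = k
  · subst htk
    simp [swapIdx_apply_left, swapIdx_apply_right h _ hjk]
  · simp [swapIdx_apply_of_ne h _ htj htk]

end swapIdx

section linForm

variable {r : ℕ} {n : Fin r → ℕ} (A : (∀ t, Fin (n t)) → ℝ)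

theorem linForm_eq_of_swap {j k : Fin r} (hjk : j ≠ k) (h : n j = n k)
    (hsym : ∀ i, A (swapIdx j k h i) = A i) {x x' : ∀ t, Fin (n t) → ℝ}
    (hj : ∀ a, x' j a = x k (Fin.cast h a)) (hk : ∀ b, x' k b = x j (Fin.cast h.symm b))
    (hother : ∀ t, t ≠ j → t ≠ k → x' t = x t) :
    linForm A x' = linForm A x := by
  refine Fintype.sum_equiv ((swapIdx_involutive h hjk).toPerm _) _ _ fun i => ?_
  simp only [Involutive.coe_toPerm, hsym]
  congr 1
  set g : Fin r → ℝ := fun t => x t (swapIdx j k h i t)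
  rw [← Equiv.prod_comp (Equiv.swap j k) g]
  refine Finset.prod_congr rfl fun t _ => ?_
  by_cases htj : t = j
  · subst htj
    rw [Equiv.swap_apply_left]
    simp [g, swapIdx_apply_right h _ hjk, hj]
  by_cases htk : t = k
  · subst htk
    rw [Equiv.swap_apply_right]
    simp [g, swapIdx_apply_left, hk]
  · rw [Equiv.swap_apply_of_ne_of_ne htj htk]
    simp [g, swapIdx_apply_of_ne h _ htj htk, hother t htj htk]

noncomputable def linFormMultilinear :
    MultilinearMap ℝ (fun t => EuclideanSpace ℝ (Fin (n t))) ℝ :=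
  ∑ i : ∀ t, Fin (n t), A i •
    (MultilinearMap.mkPiAlgebra ℝ (Fin r) ℝ).compLinearMap
      fun t => (EuclideanSpace.proj (i t) : EuclideanSpace ℝ (Fin (n t)) →L[ℝ] ℝ).toLinearMap

theorem linFormMultilinear_apply (y : ∀ t, EuclideanSpace ℝ (Fin (n t))) :
    linFormMultilinear A y = linForm A fun t => (y t).ofLp := by
  simp [linFormMultilinear, linForm]

theorem linFormMultilinear_update_swap {j k : Fin r} (hjk : j ≠ k) (h : n j = n k)
    (hsym : ∀ i, A (swapIdx j k h i) = A i) (y : ∀ t, EuclideanSpace ℝ (Fin (n t)))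
    (u v : EuclideanSpace ℝ (Fin (n j))) :
    linFormMultilinear A
        (update (update y k (LinearIsometryEquiv.piLpCongrLeft 2 ℝ ℝ (finCongr h) v)) j u) =
      linFormMultilinear A
        (update (update y k (LinearIsometryEquiv.piLpCongrLeft 2 ℝ ℝ (finCongr h) u)) j v) := by
  rw [linFormMultilinear_apply, linFormMultilinear_apply]
  apply linForm_eq_of_swap A hjk h hsym
  · intro a
    simp [hjk.symm]
  · intro b
    simp [hjk.symm]
  · intro t htj htk
    simp [htj, htk]

end linForm

theorem twoNorm_eq_max_with_equal_coords_general {r : ℕ} {n : Fin r → ℕ}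
    (j k : Fin r) (hjk : j ≠ k) (h : n j = n k)
    (A : (∀ t, Fin (n t)) → ℝ)
    (hsym : ∀ i, A (swapIdx j k h i) = A i) :
    hmNorm 2 A = sSup {v | ∃ x : ∀ t, Fin (n t) → ℝ,
      (∀ t, lpNorm 2 (x t) = 1) ∧ (∀ a : Fin (n j), x j a = x k (Fin.cast h a)) ∧
      v = |linForm A x|} := by
  let e := LinearIsometryEquiv.piLpCongrLeft 2 ℝ ℝ (finCongr h)
  let toEuclidean : (∀ t, Fin (n t) → ℝ) ≃ ∀ t, EuclideanSpace ℝ (Fin (n t)) :=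
    Equiv.piCongrRight fun t => (WithLp.equiv 2 (Fin (n t) → ℝ)).symm
  have hnorm : ∀ {m} (x : Fin m → ℝ), lpNorm 2 x = ‖WithLp.toLp 2 x‖ := fun x => by
    simpa using lpNorm_toReal_eq_norm_toLp (p := 2) two_pos x
  have hT : {v | ∃ x : ∀ t, Fin (n t) → ℝ, (∀ t, lpNorm 2 (x t) = 1) ∧ v = |linForm A x|} =
      {c | ∃ y, (∀ t, ‖y t‖ = 1) ∧ c = |linFormMultilinear A y|} := by
    ext c
    exact toEuclidean.exists_congr fun x => by simp [toEuclidean, hnorm, linFormMultilinear_apply]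
  have hS : {v | ∃ x : ∀ t, Fin (n t) → ℝ, (∀ t, lpNorm 2 (x t) = 1) ∧
      (∀ a : Fin (n j), x j a = x k (Fin.cast h a)) ∧ v = |linForm A x|} =
      {c | ∃ y, (∀ t, ‖y t‖ = 1) ∧ e (y j) = y k ∧ c = |linFormMultilinear A y|} := by
    ext c
    exact toEuclidean.exists_congr fun x => by
      simp [toEuclidean, e, hnorm, linFormMultilinear_apply, piLpCongrLeft_finCongr_toLp_eq_iff]
  rw [hmNorm, hT, hS]
  exact (linFormMultilinear A).sSup_abs_eq_sSup_abs_of_symm e hjk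
    (linFormMultilinear_update_swap A hjk h hsym)

/-- **Theorem 2 (thr2).** If `A` is a `(j,k)`-symmetric `r`-matrix (`r ≥ 2`), then its
`2`-norm is attained by restricting to tuples of unit vectors with `x⁽ʲ⁾ = x⁽ᵏ⁾`. -/
theorem twoNorm_eq_max_with_equal_coords {r : ℕ} (hr : 2 ≤ r) {n : Fin r → ℕ}
    (j k : Fin r) (hjk : j ≠ k) (h : n j = n k)
    (A : (∀ t, Fin (n t)) → ℝ)
    (hsym : ∀ i, A (swapIdx j k h i) = A i) :
    hmNorm 2 A = sSup {v | ∃ x : ∀ t, Fin (n t) → ℝ,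
      (∀ t, lpNorm 2 (x t) = 1) ∧ (∀ a : Fin (n j), x j a = x k (Fin.cast h a)) ∧
      v = |linForm A x|} :=
  twoNorm_eq_max_with_equal_coords_general j k hjk h A hsym
end

section
/- Let $r \ge 2$, let $p \ge 2$, and let $A$ be a $(j,k)$-symmetric nonnegative $r$-matrix of order $n_1 \times \cdots \times n_r$. Then $\|A\|_p = \max L_A(x^{(1)}, \ldots, x^{(r)})$, where the maximum is taken over all vectors $x^{(1)} \in \mathbb{R}^{n_1}, \ldots, x^{(r)} \in \mathbb{R}^{n_r}$ with $|x^{(1)}|_p = \cdots = |x^{(r)}|_p = 1$ and $x^{(j)} = x^{(k)}$. -/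
open Finset

section Struct
variable {r : ℕ} {n : Fin r → ℕ} {j k : Fin r} {h : n j = n k}

lemma swapIdx_apply_j (h : n j = n k) (i : ∀ t, Fin (n t)) : swapIdx j k h i j = Fin.cast h.symm (i k) := by
  unfold swapIdx; rw [dif_pos rfl]

lemma swapIdx_apply_k (hjk : j ≠ k) (h : n j = n k) (i : ∀ t, Fin (n t)) : swapIdx j k h i k = Fin.cast h (i j) := by
  unfold swapIdx; rw [dif_neg (Ne.symm hjk), dif_pos rfl]

lemma swapIdx_apply_other (h : n j = n k) {t : Fin r} (ht : t ≠ j) (ht' : t ≠ k) (i : ∀ t, Fin (n t)) :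
    swapIdx j k h i t = i t := by
  unfold swapIdx; rw [dif_neg ht, dif_neg ht']

lemma swapIdx_involutive_s2 (hjk : j ≠ k) (h : n j = n k) (i : ∀ t, Fin (n t)) :
    swapIdx j k h (swapIdx j k h i) = i := by
  funext t
  by_cases htj : t = j
  · subst htj
    rw [swapIdx_apply_j, swapIdx_apply_k hjk]
    exact Fin.ext (by simp)
  · by_cases htk : t = k
    · subst htk
      rw [swapIdx_apply_k hjk, swapIdx_apply_j]
      exact Fin.ext (by simp)
    · rw [swapIdx_apply_other h htj htk, swapIdx_apply_other h htj htk]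

end Struct

noncomputable def Mp' (p a b : ℝ) : ℝ := ((a ^ p + b ^ p) / 2) ^ (1 / p)

noncomputable def symVec {r : ℕ} {n : Fin r → ℕ} (j k : Fin r) (h : n j = n k) (p : ℝ)
    (y : ∀ t, Fin (n t) → ℝ) : ∀ t, Fin (n t) → ℝ := fun t =>
  if ht : t = j then fun a =>
    Mp' p (y j (Fin.cast (congrArg n ht) a)) (y k (Fin.cast ((congrArg n ht).trans h) a))
  else if ht' : t = k then fun b =>
    Mp' p (y j (Fin.cast ((congrArg n ht').trans h.symm) b)) (y k (Fin.cast (congrArg n ht') b))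
  else y t

section SymVec
variable {r : ℕ} {n : Fin r → ℕ} {j k : Fin r} {p : ℝ}

lemma symVec_apply_j (h : n j = n k) (y : ∀ t, Fin (n t) → ℝ) (a : Fin (n j)) :
    symVec j k h p y j a = Mp' p (y j a) (y k (Fin.cast h a)) := by
  unfold symVec; rw [dif_pos rfl]
  congr 1 <;> exact congrArg _ (Fin.ext rfl)

lemma symVec_apply_k (hjk : j ≠ k) (h : n j = n k) (y : ∀ t, Fin (n t) → ℝ) (b : Fin (n k)) :
    symVec j k h p y k b = Mp' p (y j (Fin.cast h.symm b)) (y k b) := by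
  unfold symVec; rw [dif_neg (Ne.symm hjk), dif_pos rfl]
  congr 1 <;> exact congrArg _ (Fin.ext rfl)

lemma symVec_apply_other (h : n j = n k) {t : Fin r} (ht : t ≠ j) (ht' : t ≠ k)
    (y : ∀ t, Fin (n t) → ℝ) : symVec j k h p y t = y t := by
  unfold symVec; rw [dif_neg ht, dif_neg ht']

end SymVec

section LpLemmas
variable {m : ℕ} {p : ℝ}

lemma lpNorm_sum_eq (hp : 0 < p) {x : Fin m → ℝ} (hx : lpNorm p x = 1) :
    ∑ i, |x i| ^ p = 1 := by
  have h0 : (0:ℝ) ≤ ∑ i, |x i| ^ p :=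
    Finset.sum_nonneg fun i _ => Real.rpow_nonneg (abs_nonneg _) _
  have := congrArg (· ^ p) hx
  simpa [lpNorm, one_div, Real.rpow_inv_rpow h0 hp.ne', Real.one_rpow] using this

lemma entry_abs_le_one (hp : 0 < p) {x : Fin m → ℝ} (hx : lpNorm p x = 1) (a : Fin m) :
    |x a| ≤ 1 := by
  have hs := lpNorm_sum_eq hp hx
  have h1 : |x a| ^ p ≤ 1 := by
    rw [← hs]
    exact Finset.single_le_sum (fun i _ => Real.rpow_nonneg (abs_nonneg _) _) (mem_univ a)
  by_contra hcon
  push_neg at hcon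
  have : (1:ℝ) < |x a| ^ p := (Real.one_lt_rpow_iff_of_pos (lt_trans one_pos hcon)).mpr (Or.inl ⟨hcon, hp⟩)
  linarith

lemma lpNorm_one_of_sum (hp : 0 < p) {x : Fin m → ℝ} (hx : ∑ i, |x i| ^ p = 1) :
    lpNorm p x = 1 := by
  rw [lpNorm, hx, Real.one_rpow]

end LpLemmas
lemma Mp'_nonneg {p a b : ℝ} (ha : 0 ≤ a) (hb : 0 ≤ b) : 0 ≤ Mp' p a b :=
  Real.rpow_nonneg (div_nonneg (add_nonneg (Real.rpow_nonneg ha p) (Real.rpow_nonneg hb p))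
    two_pos.le) _

lemma Mp'_rpow {p a b : ℝ} (hp : p ≠ 0) (ha : 0 ≤ a) (hb : 0 ≤ b) :
    Mp' p a b ^ p = (a ^ p + b ^ p) / 2 := by
  rw [Mp', one_div, Real.rpow_inv_rpow (div_nonneg (add_nonneg (Real.rpow_nonneg ha p)
    (Real.rpow_nonneg hb p)) two_pos.le) hp]

lemma sqrtMean_le_Mp' {p a b : ℝ} (hp : 2 ≤ p) (ha : 0 ≤ a) (hb : 0 ≤ b) :
    Real.sqrt ((a ^ 2 + b ^ 2) / 2) ≤ Mp' p a b := by
  have hp0 : (0:ℝ) < p := lt_of_lt_of_le two_pos hp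
  have ha2 : ((a:ℝ) ^ 2) ^ (p / 2) = a ^ p := by
    rw [← Real.rpow_natCast a 2, ← Real.rpow_mul ha]
    congr 1; push_cast; ring
  have hb2 : ((b:ℝ) ^ 2) ^ (p / 2) = b ^ p := by
    rw [← Real.rpow_natCast b 2, ← Real.rpow_mul hb]
    congr 1; push_cast; ring
  have h1 : ((1/2 : ℝ) * a ^ 2 + (1/2 : ℝ) * b ^ 2) ^ (p / 2)
      ≤ (1/2 : ℝ) * (a ^ 2 : ℝ) ^ (p/2) + (1/2 : ℝ) * (b ^ 2 : ℝ) ^ (p/2) := by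
    have := Real.rpow_arith_mean_le_arith_mean_rpow (Finset.univ : Finset (Fin 2))
      ![1/2, 1/2] ![a ^ 2, b ^ 2] (by intro i _; fin_cases i <;> norm_num)
      (by norm_num [Fin.sum_univ_two]) (by intro i _; fin_cases i <;> simp <;> positivity)
      (by linarith : (1:ℝ) ≤ p / 2)
    simpa [Fin.sum_univ_two] using this
  rw [ha2, hb2] at h1
  have hX : (0:ℝ) ≤ (a ^ 2 + b ^ 2) / 2 := by positivity
  have h2 : ((a ^ 2 + b ^ 2) / 2 : ℝ) ^ (p/2) ≤ (a ^ p + b ^ p) / 2 := by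
    have e : ((a ^ 2 + b ^ 2) / 2 : ℝ) = (1/2 : ℝ) * a ^ 2 + (1/2 : ℝ) * b ^ 2 := by ring
    rw [e]; linarith
  rw [Real.sqrt_eq_rpow]
  have h3 : ((a ^ 2 + b ^ 2) / 2 : ℝ) ^ (1/2 : ℝ)
      = (((a ^ 2 + b ^ 2) / 2 : ℝ) ^ (p/2)) ^ (1/p : ℝ) := by
    rw [← Real.rpow_mul hX]; congr 1; field_simp
  rw [h3]
  exact Real.rpow_le_rpow (Real.rpow_nonneg hX _) h2 (by positivity)

lemma keyIneq {p a b c d : ℝ} (hp : 2 ≤ p) (ha : 0 ≤ a) (hb : 0 ≤ b) (hc : 0 ≤ c)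
    (hd : 0 ≤ d) : a * d + b * c ≤ 2 * Mp' p a b * Mp' p c d := by
  set s := Real.sqrt ((a ^ 2 + b ^ 2) / 2) with hs_def
  set t := Real.sqrt ((c ^ 2 + d ^ 2) / 2) with ht_def
  have hs0 : 0 ≤ s := Real.sqrt_nonneg _
  have ht0 : 0 ≤ t := Real.sqrt_nonneg _
  have hs : s ^ 2 = (a ^ 2 + b ^ 2) / 2 := Real.sq_sqrt (by positivity)
  have ht : t ^ 2 = (c ^ 2 + d ^ 2) / 2 := Real.sq_sqrt (by positivity)
  have h4 : (a * d + b * c) ^ 2 ≤ (2 * s * t) ^ 2 := by nlinarith [sq_nonneg (a * c - b * d)]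
  have h5 : a * d + b * c ≤ 2 * s * t := by
    have := Real.sqrt_le_sqrt h4
    rwa [Real.sqrt_sq (by positivity), Real.sqrt_sq (by positivity)] at this
  calc a * d + b * c ≤ 2 * s * t := h5
    _ ≤ 2 * Mp' p a b * Mp' p c d := by
        apply mul_le_mul (by have := sqrtMean_le_Mp' hp ha hb; linarith)
          (sqrtMean_le_Mp' hp hc hd) ht0
        have := Mp'_nonneg (p := p) ha hb; linarith

section Core
variable {r : ℕ} {n : Fin r → ℕ} {j k : Fin r} {p : ℝ}

lemma symVec_constraint (hjk : j ≠ k) (h : n j = n k) (y : ∀ t, Fin (n t) → ℝ)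
    (a : Fin (n j)) : symVec j k h p y j a = symVec j k h p y k (Fin.cast h a) := by
  rw [symVec_apply_j h, symVec_apply_k hjk h]
  congr 1

lemma prod_split (hjk : j ≠ k) (g : Fin r → ℝ) :
    ∏ t, g t = g j * (g k * ∏ t ∈ (univ.erase j).erase k, g t) := by
  rw [← Finset.mul_prod_erase univ _ (mem_univ j),
    ← Finset.mul_prod_erase _ _ (Finset.mem_erase.mpr ⟨Ne.symm hjk, mem_univ k⟩)]

lemma linForm_le_symVec (hjk : j ≠ k) (h : n j = n k) (hp : 2 ≤ p)
    (A : (∀ t, Fin (n t)) → ℝ) (hA : ∀ i, 0 ≤ A i)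
    (hsym : ∀ i, A (swapIdx j k h i) = A i) (y : ∀ t, Fin (n t) → ℝ)
    (hy : ∀ t a, 0 ≤ y t a) :
    linForm A y ≤ linForm A (symVec j k h p y) := by
  set z := symVec j k h p y with hz
  have hbij : Function.Bijective (swapIdx j k h) :=
    Function.Involutive.bijective (swapIdx_involutive_s2 hjk h)
  have hre : linForm A y = ∑ i : ∀ t, Fin (n t), A i * ∏ t, y t (swapIdx j k h i t) := by
    rw [linForm, ← Function.Bijective.sum_comp hbij (fun i => A i * ∏ t, y t (i t))]
    exact Finset.sum_congr rfl fun i _ => by rw [hsym]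
  have hmain : ∀ i : ∀ t, Fin (n t),
      A i * ∏ t, y t (i t) + A i * ∏ t, y t (swapIdx j k h i t)
        ≤ 2 * (A i * ∏ t, z t (i t)) := by
    intro i
    set Q := ∏ t ∈ (univ.erase j).erase k, y t (i t) with hQ
    have hQ0 : 0 ≤ Q := Finset.prod_nonneg fun t _ => hy t _
    have e1 : ∏ t, y t (i t) = y j (i j) * (y k (i k) * Q) :=
      prod_split hjk (fun t => y t (i t))
    have e2 : ∏ t, y t (swapIdx j k h i t)
        = y j (Fin.cast h.symm (i k)) * (y k (Fin.cast h (i j)) * Q) := by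
      rw [prod_split hjk (fun t => y t (swapIdx j k h i t)), swapIdx_apply_j,
        swapIdx_apply_k hjk]
      congr 2
      apply Finset.prod_congr rfl
      intro t ht
      obtain ⟨htk, ht2⟩ := Finset.mem_erase.mp ht
      obtain ⟨htj, -⟩ := Finset.mem_erase.mp ht2
      rw [swapIdx_apply_other h htj htk]
    have e3 : ∏ t, z t (i t) = Mp' p (y j (i j)) (y k (Fin.cast h (i j)))
        * (Mp' p (y j (Fin.cast h.symm (i k))) (y k (i k)) * Q) := by
      rw [prod_split hjk (fun t => z t (i t)), hz, symVec_apply_j h, symVec_apply_k hjk h]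
      congr 2
      apply Finset.prod_congr rfl
      intro t ht
      obtain ⟨htk, ht2⟩ := Finset.mem_erase.mp ht
      obtain ⟨htj, -⟩ := Finset.mem_erase.mp ht2
      rw [symVec_apply_other h htj htk]
    rw [e1, e2, e3]
    have hk := keyIneq hp (hy j (i j)) (hy k (Fin.cast h (i j))) (hy j (Fin.cast h.symm (i k)))
      (hy k (i k))
    have hAi := hA i
    set a := y j (i j); set b := y k (Fin.cast h (i j))
    set c := y j (Fin.cast h.symm (i k)); set d := y k (i k)
    calc A i * (a * (d * Q)) + A i * (c * (b * Q)) = A i * ((a * d + b * c) * Q) := by ring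
      _ ≤ A i * ((2 * Mp' p a b * Mp' p c d) * Q) :=
          mul_le_mul_of_nonneg_left (mul_le_mul_of_nonneg_right hk hQ0) hAi
      _ = 2 * (A i * (Mp' p a b * (Mp' p c d * Q))) := by ring
  have hfin : 2 * linForm A y ≤ 2 * linForm A z := by
    calc 2 * linForm A y
        = ∑ i : ∀ t, Fin (n t), (A i * ∏ t, y t (i t) + A i * ∏ t, y t (swapIdx j k h i t)) := by
          rw [Finset.sum_add_distrib, ← linForm, ← hre]; ring
      _ ≤ ∑ i : ∀ t, Fin (n t), 2 * (A i * ∏ t, z t (i t)) :=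
          Finset.sum_le_sum fun i _ => hmain i
      _ = 2 * linForm A z := by rw [← Finset.mul_sum, linForm]
  linarith

lemma lpNorm_symVec (hjk : j ≠ k) (h : n j = n k) (hp0 : 0 < p) (y : ∀ t, Fin (n t) → ℝ)
    (hy : ∀ t a, 0 ≤ y t a) (hnorm : ∀ t, lpNorm p (y t) = 1) (t : Fin r) :
    lpNorm p (symVec j k h p y t) = 1 := by
  have hyj : ∑ a, (y j a) ^ p = 1 := by
    rw [← lpNorm_sum_eq hp0 (hnorm j)]
    exact Finset.sum_congr rfl fun a _ => by rw [abs_of_nonneg (hy j a)]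
  have hyk : ∑ b, (y k b) ^ p = 1 := by
    rw [← lpNorm_sum_eq hp0 (hnorm k)]
    exact Finset.sum_congr rfl fun b _ => by rw [abs_of_nonneg (hy k b)]
  by_cases htj : t = j
  · subst htj
    have hfe : symVec t k h p y t = fun a => Mp' p (y t a) (y k (Fin.cast h a)) :=
      funext (symVec_apply_j h y)
    rw [hfe]
    apply lpNorm_one_of_sum hp0
    have step : ∀ a, |Mp' p (y t a) (y k (Fin.cast h a))| ^ p
        = ((y t a) ^ p + (y k (Fin.cast h a)) ^ p) / 2 := fun a => by
      rw [abs_of_nonneg (Mp'_nonneg (hy t a) (hy k _)),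
        Mp'_rpow hp0.ne' (hy t a) (hy k _)]
    have hcast : ∑ a : Fin (n t), (y k (Fin.cast h a)) ^ p = ∑ b, (y k b) ^ p :=
      Fintype.sum_equiv (finCongr h) _ _ (fun a => rfl)
    rw [Finset.sum_congr rfl fun a _ => step a, ← Finset.sum_div, Finset.sum_add_distrib,
      hyj, hcast, hyk]
    norm_num
  · by_cases htk : t = k
    · subst htk
      have hfe : symVec j t h p y t = fun b => Mp' p (y j (Fin.cast h.symm b)) (y t b) :=
        funext (symVec_apply_k hjk h y)
      rw [hfe]
      apply lpNorm_one_of_sum hp0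
      have step : ∀ b, |Mp' p (y j (Fin.cast h.symm b)) (y t b)| ^ p
          = ((y j (Fin.cast h.symm b)) ^ p + (y t b) ^ p) / 2 := fun b => by
        rw [abs_of_nonneg (Mp'_nonneg (hy j _) (hy t b)),
          Mp'_rpow hp0.ne' (hy j _) (hy t b)]
      have hcast : ∑ b : Fin (n t), (y j (Fin.cast h.symm b)) ^ p = ∑ a, (y j a) ^ p :=
        Fintype.sum_equiv (finCongr h.symm) _ _ (fun b => rfl)
      rw [Finset.sum_congr rfl fun b _ => step b, ← Finset.sum_div, Finset.sum_add_distrib,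
        hcast, hyj, hyk]
      norm_num
    · rw [symVec_apply_other h htj htk]
      exact hnorm t

end Core

section Glue
variable {r : ℕ} {n : Fin r → ℕ} {p : ℝ}

lemma abs_linForm_le_abs (A : (∀ t, Fin (n t)) → ℝ) (hA : ∀ i, 0 ≤ A i)
    (x : ∀ t, Fin (n t) → ℝ) :
    |linForm A x| ≤ linForm A (fun t a => |x t a|) := by
  rw [linForm, linForm]
  refine (Finset.abs_sum_le_sum_abs _ _).trans (le_of_eq (Finset.sum_congr rfl fun i _ => ?_))
  rw [abs_mul, abs_of_nonneg (hA i), Finset.abs_prod]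

lemma linForm_bound (hp0 : 0 < p) (A : (∀ t, Fin (n t)) → ℝ) (x : ∀ t, Fin (n t) → ℝ)
    (hx : ∀ t, lpNorm p (x t) = 1) : |linForm A x| ≤ ∑ i : ∀ t, Fin (n t), |A i| := by
  refine (Finset.abs_sum_le_sum_abs _ _).trans (Finset.sum_le_sum fun i _ => ?_)
  rw [abs_mul, Finset.abs_prod]
  have hle : ∏ t, |x t (i t)| ≤ 1 :=
    Finset.prod_le_one (fun t _ => abs_nonneg _) (fun t _ => entry_abs_le_one hp0 (hx t) _)
  calc |A i| * ∏ t, |x t (i t)| ≤ |A i| * 1 :=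
        mul_le_mul_of_nonneg_left hle (abs_nonneg _)
    _ = |A i| := mul_one _

lemma no_unit (hp0 : 0 < p) {m : ℕ} (hm : m = 0) (x : Fin m → ℝ) : lpNorm p x ≠ 1 := by
  subst hm
  rw [lpNorm]
  rw [show (∑ i : Fin 0, |x i| ^ p) = 0 from Finset.sum_empty,
    Real.zero_rpow (one_div_ne_zero hp0.ne')]
  exact zero_ne_one

lemma indicator_unit (hp0 : 0 < p) {m : ℕ} (hm : m ≠ 0) :
    lpNorm p (fun a : Fin m => if (a : ℕ) = 0 then (1:ℝ) else 0) = 1 := by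
  apply lpNorm_one_of_sum hp0
  have step : ∀ a : Fin m, |if (a : ℕ) = 0 then (1:ℝ) else 0| ^ p
      = if a = (⟨0, Nat.pos_of_ne_zero hm⟩ : Fin m) then (1:ℝ) else 0 := by
    intro a
    by_cases ha : (a : ℕ) = 0
    · rw [if_pos ha, if_pos (Fin.ext ha), abs_one, Real.one_rpow]
    · rw [if_neg ha, if_neg (fun hc => ha (by rw [hc])), abs_zero, Real.zero_rpow hp0.ne']
  rw [Finset.sum_congr rfl fun a _ => step a]
  simp

end Glue

/-- **Theorem 3 (thrp).** If `A` is a `(j,k)`-symmetric nonnegative `r`-matrix (`r ≥ 2`)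
and `p ≥ 2`, then `‖A‖_p` equals the maximum of `L_A(x⁽¹⁾,…,x⁽ʳ⁾)` over unit vectors
with `x⁽ʲ⁾ = x⁽ᵏ⁾`. -/
theorem pNorm_eq_max_with_equal_coords_of_nonneg {r : ℕ} (hr : 2 ≤ r) {p : ℝ}
    (hp : 2 ≤ p) {n : Fin r → ℕ} (j k : Fin r) (hjk : j ≠ k) (h : n j = n k)
    (A : (∀ t, Fin (n t)) → ℝ) (hA : ∀ i, 0 ≤ A i)
    (hsym : ∀ i, A (swapIdx j k h i) = A i) :
    hmNorm p A = sSup {v | ∃ x : ∀ t, Fin (n t) → ℝ,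
      (∀ t, lpNorm p (x t) = 1) ∧ (∀ a : Fin (n j), x j a = x k (Fin.cast h a)) ∧
      v = linForm A x} := by
  have hp0 : (0:ℝ) < p := lt_of_lt_of_le two_pos hp
  set S₁ : Set ℝ :=
    {v | ∃ x : ∀ t, Fin (n t) → ℝ, (∀ t, lpNorm p (x t) = 1) ∧ v = |linForm A x|} with hS₁
  set S₂ : Set ℝ := {v | ∃ x : ∀ t, Fin (n t) → ℝ,
    (∀ t, lpNorm p (x t) = 1) ∧ (∀ a : Fin (n j), x j a = x k (Fin.cast h a)) ∧
    v = linForm A x} with hS₂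
  rw [hmNorm]
  by_cases hn : ∀ t, n t ≠ 0
  · have heu : ∀ t, lpNorm p (fun a : Fin (n t) => if (a : ℕ) = 0 then (1:ℝ) else 0) = 1 :=
      fun t => indicator_unit hp0 (hn t)
    have hS1ne : S₁.Nonempty :=
      ⟨_, fun t a => if (a : ℕ) = 0 then (1:ℝ) else 0, heu, rfl⟩
    have hS2ne : S₂.Nonempty :=
      ⟨_, fun t a => if (a : ℕ) = 0 then (1:ℝ) else 0, heu, fun a => rfl, rfl⟩
    have hbdd1 : BddAbove S₁ := by
      refine ⟨∑ i : ∀ t, Fin (n t), |A i|, ?_⟩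
      rintro v ⟨x, hx, rfl⟩
      exact linForm_bound hp0 A x hx
    have hbdd2 : BddAbove S₂ := by
      refine ⟨∑ i : ∀ t, Fin (n t), |A i|, ?_⟩
      rintro v ⟨x, hx, -, rfl⟩
      exact le_trans (le_abs_self _) (linForm_bound hp0 A x hx)
    apply le_antisymm
    · apply csSup_le hS1ne
      rintro v ⟨x, hx, rfl⟩
      set y : ∀ t, Fin (n t) → ℝ := fun t a => |x t a| with hydef
      have hy : ∀ t a, 0 ≤ y t a := fun t a => abs_nonneg _
      have hynorm : ∀ t, lpNorm p (y t) = 1 := by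
        intro t
        rw [← hx t, lpNorm, lpNorm]
        congr 1
        exact Finset.sum_congr rfl fun a _ => by rw [hydef, abs_abs]
      calc |linForm A x| ≤ linForm A y := abs_linForm_le_abs A hA x
        _ ≤ linForm A (symVec j k h p y) := linForm_le_symVec hjk h hp A hA hsym y hy
        _ ≤ sSup S₂ := le_csSup hbdd2 ⟨symVec j k h p y,
            fun t => lpNorm_symVec hjk h hp0 y hy hynorm t,
            fun a => symVec_constraint hjk h y a, rfl⟩
    · apply csSup_le hS2ne
      rintro v ⟨x, hx, -, rfl⟩
      exact le_trans (le_abs_self _) (le_csSup hbdd1 ⟨x, hx, rfl⟩)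
  · push_neg at hn
    obtain ⟨t0, ht0⟩ := hn
    have h1 : S₁ = ∅ := by
      ext v
      simp only [Set.mem_empty_iff_false, iff_false, hS₁, Set.mem_setOf_eq]
      rintro ⟨x, hx, -⟩
      exact no_unit hp0 ht0 (x t0) (hx t0)
    have h2 : S₂ = ∅ := by
      ext v
      simp only [Set.mem_empty_iff_false, iff_false, hS₂, Set.mem_setOf_eq]
      rintro ⟨x, hx, -, -⟩
      exact no_unit hp0 ht0 (x t0) (hx t0)
    rw [← hS₁, h1, h2]
end

section
/- Let $r \ge 2$, let $p \ge 2$, and let $A$ be a symmetric nonnegative $r$-matrix of order $n$. Then $\|A\|_p = \max_{|x|_p = 1} L_A(x, \ldots, x)$, i.e. the $p$-norm of $A$ equals its $p$-spectral radius $\rho^{(p)}(A)$. -/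
open Finset

/-- The linear form of a cubical `r`-matrix `A` of order `n`. -/
noncomputable def linFormC {r n : ℕ} (A : (Fin r → Fin n) → ℝ)
    (x : Fin r → Fin n → ℝ) : ℝ :=
  ∑ i : Fin r → Fin n, A i * ∏ t, x t (i t)

lemma pm2 {q X Y : ℝ} (hq : 1 ≤ q) (hX : 0 ≤ X) (hY : 0 ≤ Y) :
    ((X + Y)/2) ^ q ≤ (X ^ q + Y ^ q)/2 := by
  have h := NNReal.rpow_arith_mean_le_arith_mean2_rpow (1/2) (1/2) ⟨X, hX⟩ ⟨Y, hY⟩ (by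
    rw [← NNReal.coe_inj]; push_cast; norm_num) hq
  have h2 := NNReal.coe_le_coe.2 h
  push_cast at h2
  calc ((X + Y)/2) ^ q = (1/2 * X + 1/2 * Y) ^ q := by ring_nf
    _ ≤ 1/2 * X ^ q + 1/2 * Y ^ q := h2
    _ = (X ^ q + Y ^ q)/2 := by ring

lemma pm_sq {p a b : ℝ} (hp : 2 ≤ p) (ha : 0 ≤ a) (hb : 0 ≤ b) :
    (a^2 + b^2)/2 ≤ ((a ^ p + b ^ p)/2) ^ (1/p) * ((a ^ p + b ^ p)/2) ^ (1/p) := by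
  have hp0 : (0:ℝ) < p := by linarith
  set X := a^2 with hXdef
  set Y := b^2 with hYdef
  have hX : 0 ≤ X := sq_nonneg a
  have hY : 0 ≤ Y := sq_nonneg b
  have hq : (1:ℝ) ≤ p/2 := by linarith
  have h1 : ((X + Y)/2) ^ (p/2) ≤ (X ^ (p/2) + Y ^ (p/2))/2 := pm2 hq hX hY
  have hXp : X ^ (p/2) = a ^ p := by
    rw [hXdef, ← Real.rpow_natCast a 2, ← Real.rpow_mul ha,
      show ((2:ℕ):ℝ)*(p/2) = p by push_cast; ring]
  have hYp : Y ^ (p/2) = b ^ p := by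
    rw [hYdef, ← Real.rpow_natCast b 2, ← Real.rpow_mul hb,
      show ((2:ℕ):ℝ)*(p/2) = p by push_cast; ring]
  rw [hXp, hYp] at h1
  have hs : (0:ℝ) ≤ (X+Y)/2 := by positivity
  have h2 : (((X + Y)/2) ^ (p/2)) ^ (2/p) ≤ ((a ^ p + b ^ p)/2) ^ (2/p) := by
    apply Real.rpow_le_rpow (by positivity) h1 (by positivity)
  rw [← Real.rpow_mul hs] at h2
  have : p/2 * (2/p) = 1 := by field_simp
  rw [this, Real.rpow_one] at h2
  have hrhs : ((a ^ p + b ^ p)/2) ^ (2/p)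
      = ((a ^ p + b ^ p)/2) ^ (1/p) * ((a ^ p + b ^ p)/2) ^ (1/p) := by
    rw [show (2:ℝ)/p = 1/p + 1/p by ring,
      Real.rpow_add' (by positivity) (by positivity)]
  rw [hrhs] at h2
  exact h2

lemma key1 {p a b c d : ℝ} (hp : 2 ≤ p) (ha : 0 ≤ a) (hb : 0 ≤ b) (hc : 0 ≤ c) (hd : 0 ≤ d) :
    (a*d + b*c)/2 ≤ ((a ^ p + b ^ p)/2) ^ (1/p) * ((c ^ p + d ^ p)/2) ^ (1/p) := by
  set z1 := ((a ^ p + b ^ p)/2) ^ (1/p) with hz1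
  set z2 := ((c ^ p + d ^ p)/2) ^ (1/p) with hz2
  have hz1n : 0 ≤ z1 := Real.rpow_nonneg (by positivity) _
  have hz2n : 0 ≤ z2 := Real.rpow_nonneg (by positivity) _
  have h1 : (a^2 + b^2)/2 ≤ z1 * z1 := pm_sq hp ha hb
  have h2 : (c^2 + d^2)/2 ≤ z2 * z2 := pm_sq hp hc hd
  have hcs : (a*d + b*c)^2 ≤ (a^2+b^2) * (c^2+d^2) := by nlinarith [sq_nonneg (a*c - b*d)]
  nlinarith [mul_nonneg hz1n hz2n, mul_le_mul h1 h2 (by positivity) (mul_nonneg hz1n hz1n),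
    sq_nonneg (z1*z2 - (a*d+b*c)/2), sq_nonneg (z1*z2 + (a*d+b*c)/2)]

lemma sqrt_concave {u v : ℝ} (hu : 0 ≤ u) (hv : 0 ≤ v) :
    Real.sqrt u + Real.sqrt v ≤ 2 * Real.sqrt ((u + v)/2) := by
  have h1 : Real.sqrt u ^ 2 = u := Real.sq_sqrt hu
  have h2 : Real.sqrt v ^ 2 = v := Real.sq_sqrt hv
  have h3 : Real.sqrt ((u+v)/2) ^ 2 = (u+v)/2 := Real.sq_sqrt (by positivity)
  nlinarith [Real.sqrt_nonneg u, Real.sqrt_nonneg v, Real.sqrt_nonneg ((u+v)/2),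
    sq_nonneg (Real.sqrt u - Real.sqrt v)]

lemma sqrt_concave_strict {u v : ℝ} (hu : 0 ≤ u) (hv : 0 ≤ v) (hne : u ≠ v) :
    Real.sqrt u + Real.sqrt v < 2 * Real.sqrt ((u + v)/2) := by
  have h1 : Real.sqrt u ^ 2 = u := Real.sq_sqrt hu
  have h2 : Real.sqrt v ^ 2 = v := Real.sq_sqrt hv
  have h3 : Real.sqrt ((u+v)/2) ^ 2 = (u+v)/2 := Real.sq_sqrt (by positivity)
  have hsne : Real.sqrt u ≠ Real.sqrt v := fun h => hne (by rw [← h1, ← h2, h])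
  have hsub : Real.sqrt u - Real.sqrt v ≠ 0 := sub_ne_zero.2 hsne
  have : 0 < (Real.sqrt u - Real.sqrt v)^2 := by positivity
  nlinarith [Real.sqrt_nonneg u, Real.sqrt_nonneg v, Real.sqrt_nonneg ((u+v)/2)]

lemma rpow_inj {p x y : ℝ} (hp : 0 < p) (hx : 0 ≤ x) (hy : 0 ≤ y)
    (h : x ^ p = y ^ p) : x = y := by
  rcases lt_trichotomy x y with h1 | h1 | h1
  · exact absurd h (ne_of_lt (Real.rpow_lt_rpow hx h1 hp))
  · exact h1
  · exact absurd h.symm (ne_of_lt (Real.rpow_lt_rpow hy h1 hp))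

lemma linForm_perm {r n : ℕ} (A : (Fin r → Fin n) → ℝ)
    (hsym : ∀ (σ : Equiv.Perm (Fin r)) (i : Fin r → Fin n), A (i ∘ σ) = A i)
    (σ : Equiv.Perm (Fin r)) (x : Fin r → Fin n → ℝ) :
    linFormC A (fun w => x (σ w)) = linFormC A x := by
  unfold linFormC
  refine (Fintype.sum_equiv (Equiv.arrowCongr σ.symm (Equiv.refl (Fin n)))
    (fun i => A i * ∏ t, x t (i t)) (fun i => A i * ∏ t, x (σ t) (i t)) fun j => ?_).symm
  show A j * ∏ t, x t (j t) = A ((Equiv.arrowCongr σ.symm (Equiv.refl (Fin n))) j)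
      * ∏ t, x (σ t) (((Equiv.arrowCongr σ.symm (Equiv.refl (Fin n))) j) t)
  have he : (Equiv.arrowCongr σ.symm (Equiv.refl (Fin n))) j = j ∘ σ := rfl
  rw [he, hsym σ j]
  congr 1
  exact (Equiv.prod_comp σ (fun t => x t (j t))).symm

lemma merge_le {r n : ℕ} {p : ℝ} (hp : 2 ≤ p) (A : (Fin r → Fin n) → ℝ)
    (hA : ∀ i, 0 ≤ A i)
    (hsym : ∀ (σ : Equiv.Perm (Fin r)) (i : Fin r → Fin n), A (i ∘ σ) = A i)
    (x : Fin r → Fin n → ℝ) (hx : ∀ w i, 0 ≤ x w i) (s t : Fin r) (hst : s ≠ t)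
    (z : Fin n → ℝ) (hz : ∀ i, z i = ((x s i ^ p + x t i ^ p)/2) ^ (1/p)) :
    linFormC A x ≤ linFormC A (fun w => if w = s then z else if w = t then z else x w) := by
  classical
  set E := (univ.erase s).erase t with hE
  have htE : t ∈ univ.erase s := Finset.mem_erase.2 ⟨hst.symm, mem_univ t⟩
  set R : (Fin r → Fin n) → ℝ := fun i => ∏ w ∈ E, x w (i w) with hRdef
  have hR : ∀ i, 0 ≤ R i := fun i => Finset.prod_nonneg fun w _ => hx w (i w)
  have factor : ∀ c : Fin r → Fin n → ℝ, (∀ w, w ≠ s → w ≠ t → c w = x w) →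
      linFormC A c = ∑ i : Fin r → Fin n, A i * (c s (i s) * (c t (i t) * R i)) := by
    intro c hc
    unfold linFormC
    refine Finset.sum_congr rfl fun i _ => ?_
    congr 1
    rw [← Finset.mul_prod_erase univ _ (mem_univ s), ← Finset.mul_prod_erase _ _ htE]
    congr 1
    congr 1
    refine Finset.prod_congr rfl fun w hw => ?_
    have hw1 := Finset.mem_erase.1 hw
    have hw2 := Finset.mem_erase.1 hw1.2
    rw [hc w hw2.1 hw1.1]
  set c2 : Fin r → Fin n → ℝ := fun w => if w = s then x t else if w = t then x s else x w with hc2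
  set c3 : Fin r → Fin n → ℝ := fun w => if w = s then z else if w = t then z else x w with hc3
  have hL1 : linFormC A x = ∑ i : Fin r → Fin n, A i * (x s (i s) * (x t (i t) * R i)) :=
    factor x (fun _ _ _ => rfl)
  have hc2eq : c2 = fun w => x (Equiv.swap s t w) := by
    funext w
    rcases eq_or_ne w s with h | h
    · simp [hc2, h, Equiv.swap_apply_left]
    · rcases eq_or_ne w t with h' | h'
      · simp [hc2, h, h', Ne.symm hst, Equiv.swap_apply_right]
      · simp [hc2, h, h', Equiv.swap_apply_of_ne_of_ne h h']
  have hL2 : linFormC A c2 = linFormC A x := by rw [hc2eq]; exact linForm_perm A hsym _ x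
  have hL2' : ∑ i : Fin r → Fin n, A i * (x t (i s) * (x s (i t) * R i)) = linFormC A x := by
    rw [← hL2, factor c2 (fun w h1 h2 => by simp [hc2, h1, h2])]
    refine Finset.sum_congr rfl fun i _ => ?_
    simp [hc2, hst, Ne.symm hst]
  have hL3 : linFormC A c3 = ∑ i : Fin r → Fin n, A i * (z (i s) * (z (i t) * R i)) := by
    rw [factor c3 (fun w h1 h2 => by simp [hc3, h1, h2])]
    refine Finset.sum_congr rfl fun i _ => ?_
    simp [hc3, hst, Ne.symm hst]
  have hpt : ∀ i : Fin r → Fin n,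
      A i * ((x s (i s) * x t (i t) + x t (i s) * x s (i t))/2 * R i)
        ≤ A i * (z (i s) * (z (i t) * R i)) := by
    intro i
    have hk := key1 (p := p) (a := x s (i s)) (b := x t (i s)) (c := x s (i t)) (d := x t (i t))
      hp (hx s (i s)) (hx t (i s)) (hx s (i t)) (hx t (i t))
    rw [← hz (i s), ← hz (i t)] at hk
    have := mul_le_mul_of_nonneg_right hk (hR i)
    calc A i * ((x s (i s) * x t (i t) + x t (i s) * x s (i t))/2 * R i)
        ≤ A i * (z (i s) * z (i t) * R i) := mul_le_mul_of_nonneg_left this (hA i)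
      _ = A i * (z (i s) * (z (i t) * R i)) := by ring
  have hsum := Finset.sum_le_sum (s := (univ : Finset (Fin r → Fin n))) (fun i _ => hpt i)
  have hhalf : ∑ i : Fin r → Fin n,
      A i * ((x s (i s) * x t (i t) + x t (i s) * x s (i t))/2 * R i)
      = (∑ i : Fin r → Fin n, A i * (x s (i s) * (x t (i t) * R i))
        + ∑ i : Fin r → Fin n, A i * (x t (i s) * (x s (i t) * R i)))/2 := by
    rw [← Finset.sum_add_distrib, Finset.sum_div]
    refine Finset.sum_congr rfl fun i _ => ?_
    ring
  rw [hhalf, ← hL1, hL2'] at hsum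
  rw [hL3]
  calc linFormC A x = (linFormC A x + linFormC A x)/2 := by ring
    _ ≤ _ := hsum

/-- **Corollary (corp).** If `A` is a symmetric nonnegative `r`-matrix of order `n`
(`r ≥ 2`) and `p ≥ 2`, then
`‖A‖_p = max_{|x|_p = 1} L_A(x, …, x)`, i.e. the `p`-norm equals the `p`-spectral radius. -/
theorem pNorm_eq_pSpectralRadius_of_symm_nonneg {r n : ℕ} (hr : 2 ≤ r)
    {p : ℝ} (hp : 2 ≤ p) (A : (Fin r → Fin n) → ℝ) (hA : ∀ i, 0 ≤ A i)
    (hsym : ∀ (σ : Equiv.Perm (Fin r)) (i : Fin r → Fin n), A (i ∘ σ) = A i) :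
    sSup {v | ∃ x : Fin r → Fin n → ℝ, (∀ t, lpNorm p (x t) = 1) ∧
        v = |linFormC A x|}
      = sSup {v | ∃ x : Fin n → ℝ, lpNorm p x = 1 ∧
        v = linFormC A (fun _ => x)} := by
  classical
  have hp0 : (0:ℝ) < p := by linarith
  have hp1 : p ≠ 0 := ne_of_gt hp0
  have hlp_iff : ∀ {m : ℕ} (y : Fin m → ℝ), lpNorm p y = 1 ↔ ∑ i, |y i| ^ p = 1 := by
    intro m y
    unfold lpNorm
    constructor
    · intro h
      have hnn : (0:ℝ) ≤ ∑ i, |y i| ^ p :=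
        Finset.sum_nonneg fun i _ => Real.rpow_nonneg (abs_nonneg _) _
      have := congrArg (fun u : ℝ => u ^ p) h
      simp only [Real.one_rpow] at this
      rwa [← Real.rpow_mul hnn, one_div_mul_cancel hp1, Real.rpow_one] at this
    · intro h
      rw [h, Real.one_rpow]
  rcases Nat.eq_zero_or_pos n with hn | hn
  · subst hn
    have t0 : Fin r := ⟨0, by omega⟩
    have h1 : {v | ∃ x : Fin r → Fin 0 → ℝ, (∀ t, lpNorm p (x t) = 1) ∧
        v = |linFormC A x|} = ∅ := by
      ext v
      simp only [Set.mem_setOf_eq, Set.mem_empty_iff_false, iff_false]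
      rintro ⟨x, hx, -⟩
      have := hx t0
      simp [lpNorm, Real.zero_rpow (one_div_ne_zero hp1), Real.zero_rpow (inv_ne_zero hp1)] at this
    have h2 : {v | ∃ x : Fin 0 → ℝ, lpNorm p x = 1 ∧
        v = linFormC A (fun _ => x)} = ∅ := by
      ext v
      simp only [Set.mem_setOf_eq, Set.mem_empty_iff_false, iff_false]
      rintro ⟨x, hx, -⟩
      simp [lpNorm, Real.zero_rpow (one_div_ne_zero hp1), Real.zero_rpow (inv_ne_zero hp1)] at hx
    rw [h1, h2]
  -- main case n ≥ 1
  · set T : Set (Fin r → Fin n → ℝ) :=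
      {x | (∀ w i, 0 ≤ x w i) ∧ ∀ w, ∑ i, |x w i| ^ p = 1} with hT
    -- continuity of the linear form
    have hLcont : Continuous (linFormC A) := by
      unfold linFormC
      exact continuous_finset_sum _ fun i _ => continuous_const.mul
        (continuous_finset_prod _ fun t _ => (continuous_apply (i t)).comp (continuous_apply t))
    have habsp : Continuous (fun u : ℝ => |u| ^ p) :=
      continuous_abs.rpow_const (fun u => Or.inr hp0.le)
    -- T is compact
    have hTclosed : IsClosed T := by
      have e1 : {x : Fin r → Fin n → ℝ | ∀ w i, 0 ≤ x w i}
          = ⋂ w, ⋂ i, {x : Fin r → Fin n → ℝ | 0 ≤ x w i} := by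
        ext x; simp [Set.mem_iInter]
      have e2 : {x : Fin r → Fin n → ℝ | ∀ w, ∑ i, |x w i| ^ p = 1}
          = ⋂ w, (fun x : Fin r → Fin n → ℝ => ∑ i, |x w i| ^ p) ⁻¹' {1} := by
        ext x; simp [Set.mem_iInter]
      have hc1 : IsClosed {x : Fin r → Fin n → ℝ | ∀ w i, 0 ≤ x w i} := by
        rw [e1]
        exact isClosed_iInter fun w => isClosed_iInter fun i =>
          isClosed_le continuous_const ((continuous_apply i).comp (continuous_apply w))
      have hc2 : IsClosed {x : Fin r → Fin n → ℝ | ∀ w, ∑ i, |x w i| ^ p = 1} := by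
        rw [e2]
        exact isClosed_iInter fun w => IsClosed.preimage
          (continuous_finset_sum _ fun i _ =>
            habsp.comp ((continuous_apply i).comp (continuous_apply w)))
          isClosed_singleton
      have : T = {x : Fin r → Fin n → ℝ | ∀ w i, 0 ≤ x w i}
          ∩ {x | ∀ w, ∑ i, |x w i| ^ p = 1} := by
        ext x; simp [hT, Set.mem_setOf_eq, Set.mem_inter_iff]
      rw [this]; exact hc1.inter hc2
    have hentry : ∀ x ∈ T, ∀ w i, |x w i| ≤ 1 := by
      rintro x ⟨hxn, hxs⟩ w i
      by_contra hcon
      push_neg at hcon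
      have h1 : |x w i| ^ p ≤ ∑ j, |x w j| ^ p :=
        Finset.single_le_sum (fun j _ => Real.rpow_nonneg (abs_nonneg _) p) (mem_univ i)
      have h2 : (1:ℝ) < |x w i| ^ p := by
        calc (1:ℝ) = 1 ^ p := (Real.one_rpow p).symm
          _ < |x w i| ^ p := Real.rpow_lt_rpow zero_le_one hcon hp0
      rw [hxs w] at h1
      linarith
    have hTsub : T ⊆ Metric.closedBall 0 1 := by
      intro x hx
      rw [Metric.mem_closedBall, dist_zero_right]
      rw [pi_norm_le_iff_of_nonneg zero_le_one]
      intro w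
      rw [pi_norm_le_iff_of_nonneg zero_le_one]
      intro i
      rw [Real.norm_eq_abs]
      exact hentry x hx w i
    have hTcomp : IsCompact T :=
      (isCompact_closedBall (0 : Fin r → Fin n → ℝ) 1).of_isClosed_subset hTclosed hTsub
    -- T is nonempty
    set e0 : Fin n → ℝ := fun i => if i = ⟨0, hn⟩ then 1 else 0 with he0
    have he0nn : ∀ i, 0 ≤ e0 i := by
      intro i; rw [he0]; dsimp only; split <;> norm_num
    have he0sum : ∑ i, |e0 i| ^ p = 1 := by
      rw [Finset.sum_eq_single (⟨0, hn⟩ : Fin n)]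
      · simp [he0, Real.one_rpow]
      · intro j _ hj
        simp [he0, hj, Real.zero_rpow hp1]
      · intro h; exact absurd (mem_univ _) h
    have he0T : (fun _ : Fin r => e0) ∈ T := ⟨fun _ i => he0nn i, fun _ => he0sum⟩
    have hTne : T.Nonempty := ⟨_, he0T⟩
    -- maximizer of L over T
    obtain ⟨x₀, hx₀T, hx₀max'⟩ := hTcomp.exists_isMaxOn hTne hLcont.continuousOn
    have hx₀max : ∀ x ∈ T, linFormC A x ≤ linFormC A x₀ := fun x hx =>
      isMaxOn_iff.1 hx₀max' x hx
    -- K : set of maximizers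
    set K : Set (Fin r → Fin n → ℝ) :=
      T ∩ {x | linFormC A x = linFormC A x₀} with hK
    have hKcomp : IsCompact K := hTcomp.inter_right (isClosed_eq hLcont continuous_const)
    have hKne : K.Nonempty := ⟨x₀, hx₀T, rfl⟩
    set f : (Fin r → Fin n → ℝ) → ℝ :=
      fun x => ∑ i, (∑ w, Real.sqrt (|x w i| ^ p)) ^ 2 with hf
    have hfcont : Continuous f := by
      rw [hf]
      exact continuous_finset_sum _ fun i _ => (continuous_finset_sum _ fun w _ =>
        Real.continuous_sqrt.comp
          (habsp.comp ((continuous_apply i).comp (continuous_apply w)))).pow 2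
    obtain ⟨y, hyK, hymax'⟩ := hKcomp.exists_isMaxOn hKne hfcont.continuousOn
    have hymax : ∀ x ∈ K, f x ≤ f y := fun x hx => isMaxOn_iff.1 hymax' x hx
    have hyT : y ∈ T := hyK.1
    have hynn : ∀ w i, 0 ≤ y w i := hyT.1
    have hyL : linFormC A y = linFormC A x₀ := hyK.2
    -- all slots of y are equal
    have hall : ∀ s t : Fin r, y s = y t := by
      by_contra hcon
      push_neg at hcon
      obtain ⟨s, t, hst'⟩ := hcon
      have hst : s ≠ t := fun h => hst' (by rw [h])
      set z : Fin n → ℝ := fun i => ((y s i ^ p + y t i ^ p)/2) ^ (1/p) with hzdef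
      have hbase : ∀ i, (0:ℝ) ≤ (y s i ^ p + y t i ^ p)/2 := fun i =>
        div_nonneg (add_nonneg (Real.rpow_nonneg (hynn s i) p)
          (Real.rpow_nonneg (hynn t i) p)) (by norm_num)
      have hznn : ∀ i, 0 ≤ z i := fun i => Real.rpow_nonneg (hbase i) _
      have hzp : ∀ i, z i ^ p = (y s i ^ p + y t i ^ p)/2 := by
        intro i
        rw [hzdef]
        dsimp only
        rw [← Real.rpow_mul (hbase i), one_div_mul_cancel hp1, Real.rpow_one]
      set x' : Fin r → Fin n → ℝ :=
        fun w => if w = s then z else if w = t then z else y w with hx'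
      have hys : ∀ w, ∑ i, (y w i) ^ p = 1 := by
        intro w
        rw [← hyT.2 w]
        exact Finset.sum_congr rfl fun i _ => by rw [abs_of_nonneg (hynn w i)]
      have hzsum : ∑ i, |z i| ^ p = 1 := by
        have h1 : ∀ i, |z i| ^ p = (y s i ^ p + y t i ^ p)/2 := fun i => by
          rw [abs_of_nonneg (hznn i), hzp i]
        rw [Finset.sum_congr rfl fun i _ => h1 i, ← Finset.sum_div,
          Finset.sum_add_distrib, hys s, hys t]
        norm_num
      have hx'T : x' ∈ T := by
        constructor
        · intro w i
          rw [hx']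
          dsimp only
          split
          · exact hznn i
          · split
            · exact hznn i
            · exact hynn w i
        · intro w
          rw [hx']
          dsimp only
          split
          · exact hzsum
          · split
            · exact hzsum
            · exact hyT.2 w
      have hL' : linFormC A y ≤ linFormC A x' :=
        merge_le hp A hA hsym y hynn s t hst z (fun i => rfl)
      have hx'K : x' ∈ K :=
        ⟨hx'T, le_antisymm (hx₀max x' hx'T) (hyL ▸ hL')⟩
      -- strict increase of f
      obtain ⟨i₀, hi₀⟩ : ∃ i, y s i ≠ y t i := by
        by_contra hc
        push_neg at hc
        exact hst' (funext hc)
      have hune : y s i₀ ^ p ≠ y t i₀ ^ p := by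
        intro h
        exact hi₀ (rpow_inj hp0 (hynn s i₀) (hynn t i₀) h)
      -- per-index inner sums
      set g : (Fin r → Fin n → ℝ) → Fin n → ℝ :=
        fun x i => ∑ w, Real.sqrt (|x w i| ^ p) with hg
      have hgnn : ∀ x i, 0 ≤ g x i := fun x i =>
        Finset.sum_nonneg fun w _ => Real.sqrt_nonneg _
      have hsplit : ∀ (c : Fin r → Fin n → ℝ) (i : Fin n),
          g c i = Real.sqrt (|c s i| ^ p) + (Real.sqrt (|c t i| ^ p)
            + ∑ w ∈ (univ.erase s).erase t, Real.sqrt (|c w i| ^ p)) := by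
        intro c i
        rw [hg]
        dsimp only
        rw [← Finset.add_sum_erase univ _ (mem_univ s),
          ← Finset.add_sum_erase _ _ (Finset.mem_erase.2 ⟨hst.symm, mem_univ t⟩)]
      have hrest : ∀ i, ∑ w ∈ (univ.erase s).erase t, Real.sqrt (|x' w i| ^ p)
          = ∑ w ∈ (univ.erase s).erase t, Real.sqrt (|y w i| ^ p) := by
        intro i
        refine Finset.sum_congr rfl fun w hw => ?_
        have hw1 := Finset.mem_erase.1 hw
        have hw2 := Finset.mem_erase.1 hw1.2
        rw [hx']
        dsimp only
        rw [if_neg hw2.1, if_neg hw1.1]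
      have hzsqrt : ∀ i, Real.sqrt (|z i| ^ p)
          = Real.sqrt ((y s i ^ p + y t i ^ p)/2) := fun i => by
        rw [abs_of_nonneg (hznn i), hzp i]
      have hyabs : ∀ w i, |y w i| ^ p = y w i ^ p := fun w i => by
        rw [abs_of_nonneg (hynn w i)]
      have hgle : ∀ i, g y i ≤ g x' i := by
        intro i
        rw [hsplit y i, hsplit x' i, hrest i]
        have h1 : x' s i = z i := by rw [hx']; dsimp only; rw [if_pos rfl]
        have h2 : x' t i = z i := by
          rw [hx']; dsimp only; rw [if_neg (Ne.symm hst), if_pos rfl]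
        rw [h1, h2, hzsqrt i, hyabs s i, hyabs t i]
        have := sqrt_concave (u := y s i ^ p) (v := y t i ^ p)
          (Real.rpow_nonneg (hynn s i) p) (Real.rpow_nonneg (hynn t i) p)
        linarith
      have hglt : g y i₀ < g x' i₀ := by
        rw [hsplit y i₀, hsplit x' i₀, hrest i₀]
        have h1 : x' s i₀ = z i₀ := by rw [hx']; dsimp only; rw [if_pos rfl]
        have h2 : x' t i₀ = z i₀ := by
          rw [hx']; dsimp only; rw [if_neg (Ne.symm hst), if_pos rfl]
        rw [h1, h2, hzsqrt i₀, hyabs s i₀, hyabs t i₀]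
        have := sqrt_concave_strict (u := y s i₀ ^ p) (v := y t i₀ ^ p)
          (Real.rpow_nonneg (hynn s i₀) p) (Real.rpow_nonneg (hynn t i₀) p) hune
        linarith
      have hflt : f y < f x' := by
        rw [hf]
        dsimp only
        exact Finset.sum_lt_sum (fun i _ => pow_le_pow_left₀ (hgnn y i) (hgle i) 2)
          ⟨i₀, mem_univ i₀, pow_lt_pow_left₀ hglt (hgnn y i₀) two_ne_zero⟩
      exact absurd (hymax x' hx'K) (not_le.2 hflt)
    -- conclusion
    set t0 : Fin r := ⟨0, by omega⟩ with ht0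
    have hyconst : y = fun _ => y t0 := funext fun w => hall w t0
    have hy0lp : lpNorm p (y t0) = 1 := (hlp_iff (y t0)).2 (hyT.2 t0)
    have hLy : linFormC A x₀ = linFormC A (fun _ => y t0) := by
      rw [← hyL]; exact congrArg (linFormC A) hyconst
    -- the general bound
    have habs_le : ∀ x : Fin r → Fin n → ℝ, (∀ t, lpNorm p (x t) = 1) →
        |linFormC A x| ≤ linFormC A x₀ := by
      intro x hx
      have haT : (fun w i => |x w i|) ∈ T :=
        ⟨fun w i => abs_nonneg _, fun w => by
          have := (hlp_iff (x w)).1 (hx w)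
          rw [← this]
          exact Finset.sum_congr rfl fun i _ => by rw [abs_abs]⟩
      have h1 : |linFormC A x| ≤ linFormC A (fun w i => |x w i|) := by
        unfold linFormC
        refine (Finset.abs_sum_le_sum_abs _ _).trans ?_
        refine Finset.sum_le_sum fun i _ => ?_
        rw [abs_mul, abs_of_nonneg (hA i), Finset.abs_prod]
      exact h1.trans (hx₀max _ haT)
    have hL0nn : 0 ≤ linFormC A x₀ := by
      have h1 : 0 ≤ linFormC A (fun _ : Fin r => e0) := by
        unfold linFormC
        refine Finset.sum_nonneg fun i _ => mul_nonneg (hA i) ?_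
        exact Finset.prod_nonneg fun w _ => he0nn (i w)
      exact h1.trans (hx₀max _ he0T)
    have hS1 : sSup {v | ∃ x : Fin r → Fin n → ℝ, (∀ t, lpNorm p (x t) = 1) ∧
        v = |linFormC A x|} = linFormC A x₀ := by
      apply le_antisymm
      · apply Real.sSup_le
        · rintro v ⟨x, hx, rfl⟩
          exact habs_le x hx
        · exact hL0nn
      · apply le_csSup
        · exact ⟨linFormC A x₀, by rintro v ⟨x, hx, rfl⟩; exact habs_le x hx⟩
        · exact ⟨x₀, fun t => (hlp_iff (x₀ t)).2 (hx₀T.2 t), (abs_of_nonneg hL0nn).symm⟩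
    have hS2 : sSup {v | ∃ x : Fin n → ℝ, lpNorm p x = 1 ∧
        v = linFormC A (fun _ => x)} = linFormC A x₀ := by
      apply le_antisymm
      · apply Real.sSup_le
        · rintro v ⟨x, hx, rfl⟩
          exact (le_abs_self _).trans (habs_le (fun _ => x) (fun _ => hx))
        · exact hL0nn
      · apply le_csSup
        · refine ⟨linFormC A x₀, ?_⟩
          rintro v ⟨x, hx, rfl⟩
          exact (le_abs_self _).trans (habs_le (fun _ => x) (fun _ => hx))
        · exact ⟨y t0, hy0lp, hLy⟩
    rw [hS1, hS2]
end
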